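/- arXiv:2508.09869 — 2 statements merged into one kernel-verified Lean document; each statement's English description precedes it below -/
import Mathlib

section
/- For every fair division instance with finitely many agents and finitely many indivisible items, where each agent has an additive (nonnegative) valuation, there exists an allocation of all items that is envy-free up to one item (EF1). -/
/-- An allocation: pairwise disjoint bundles covering all items. -/
def IsAllocation {n m : ℕ} (A : Fin n → Finset (Fin m)) : Prop :=
  (∀ i j, i ≠ j → Disjoint (A i) (A j)) ∧ Finset.univ.biUnion A = Finset.univ

/-- Envy-freeness up to one item for additive valuations given by item values `v`. -/
def IsEF1 {n m : ℕ} (v : Fin n → Fin m → ℝ) (A : Fin n → Finset (Fin m)) : Prop :=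
  ∀ i j, A j ≠ ∅ → ∃ g ∈ A j, ∑ x ∈ (A j).erase g, v i x ≤ ∑ x ∈ A i, v i x

/-!
Round robin: the agents pick their favourite remaining item in turn. If `i` picks before `j`,
each pick of `i` is worth at least, to `i`, the pick of `j` that follows it, so `i` does not
envy `j`; if `i` picks after `j`, the same comparison works once the first pick of `j` is
discarded. Recursively, the first picker takes its favourite item and the remaining items are
allocated by round robin with that agent moved to the end of the order.
-/

open Finset Function

section
variable {α β : Type*} [DecidableEq α] [AddCommMonoid β] [LinearOrder β]

/-- The first disjunct covers `B = ∅`. -/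
def EnvyFreeUpToOne (u : α → β) (A B : Finset α) : Prop :=
  ∑ x ∈ B, u x ≤ ∑ x ∈ A, u x ∨ ∃ g ∈ B, ∑ x ∈ B.erase g, u x ≤ ∑ x ∈ A, u x

namespace EnvyFreeUpToOne

variable {u : α → β} {A B : Finset α}

lemma exists_erase_le [IsOrderedAddMonoid β] (h : EnvyFreeUpToOne u A B) (hu : ∀ x, 0 ≤ u x)
    (hB : B.Nonempty) : ∃ g ∈ B, ∑ x ∈ B.erase g, u x ≤ ∑ x ∈ A, u x := by
  rcases h with hle | hg
  · obtain ⟨g, hg⟩ := hB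
    exact ⟨g, hg, (sum_le_sum_of_subset_of_nonneg (erase_subset g B) fun x _ _ => hu x).trans hle⟩
  · exact hg

lemma sum_le_sum_insert [IsOrderedAddMonoid β] (h : EnvyFreeUpToOne u A B) {g : α} (hgA : g ∉ A)
    (hu : 0 ≤ u g) (hg : ∀ x ∈ B, u x ≤ u g) : ∑ x ∈ B, u x ≤ ∑ x ∈ insert g A, u x := by
  rw [sum_insert hgA]
  rcases h with hle | ⟨h, hhB, hle⟩
  · exact hle.trans (le_add_of_nonneg_left hu)
  · rw [← add_sum_erase B u hhB]
    exact add_le_add (hg h hhB) hle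

lemma insert_of_sum_le (h : ∑ x ∈ B, u x ≤ ∑ x ∈ A, u x) {g : α} (hgB : g ∉ B) :
    EnvyFreeUpToOne u A (insert g B) :=
  Or.inr ⟨g, mem_insert_self g B, by rwa [erase_insert hgB]⟩

end EnvyFreeUpToOne

variable {ι : Type*} [DecidableEq ι]

/-- Smaller `p` means earlier in the picking order. -/
def RoundRobinInvariant (v : ι → α → β) (p : ι → ℕ) (A : ι → Finset α) : Prop :=
  ∀ i j, (p i < p j → ∑ x ∈ A j, v i x ≤ ∑ x ∈ A i, v i x) ∧
    EnvyFreeUpToOne (v i) (A i) (A j)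

/-- One round-robin step: the first picker `a` takes its favourite item `g`, and the remaining
items `A` were allocated with `a` picking last. -/
lemma RoundRobinInvariant.update_insert [IsOrderedAddMonoid β] {v : ι → α → β}
    {p : ι → ℕ} {A : ι → Finset α} {a : ι} {N : ℕ} {g : α}
    (hA : RoundRobinInvariant v (update p a N) A) (hN : ∀ i, p i < N) (ha : ∀ i, p a ≤ p i)
    (hgA : ∀ i, g ∉ A i) (hvg : 0 ≤ v a g) (hg : ∀ i, ∀ x ∈ A i, v a x ≤ v a g) :
    RoundRobinInvariant v p (update A a (insert g (A a))) := by
  intro i j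
  by_cases hi : i = a <;> by_cases hj : j = a
  · subst hi hj
    exact ⟨fun h => absurd h (lt_irrefl _), Or.inl le_rfl⟩
  · subst hi
    rw [update_self, update_of_ne hj]
    have hle := (hA i j).2.sum_le_sum_insert (hgA i) hvg (hg j)
    exact ⟨fun _ => hle, Or.inl hle⟩
  · have hia : update p a N i < update p a N a := by simpa [update_of_ne hi] using hN i
    subst hj
    rw [update_self, update_of_ne hi]
    exact ⟨fun h => absurd (ha i) h.not_ge, .insert_of_sum_le ((hA i j).1 hia) (hgA j)⟩
  · simpa only [update_of_ne hi, update_of_ne hj] using hA i j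

lemma filter_update_eq_update_filter (S : Finset α) (f : α → ι) {g : α} (hg : g ∈ S) (a : ι) :
    (fun i => S.filter (update f g a · = i)) =
      update (fun i => (S.erase g).filter (f · = i)) a
        (insert g ((S.erase g).filter (f · = a))) := by
  funext i
  ext x
  by_cases hx : x = g <;> by_cases hi : i = a <;> simp_all [update_apply, eq_comm]

lemma exists_roundRobinInvariant [Fintype ι] [Nonempty ι] [IsOrderedAddMonoid β]
    {v : ι → α → β} (hv : ∀ i x, 0 ≤ v i x) (S : Finset α) (p : ι → ℕ) :
    ∃ f : α → ι, RoundRobinInvariant v p (fun i => S.filter (f · = i)) := by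
  induction S using Finset.strongInduction generalizing p with
  | _ S ih =>
  rcases S.eq_empty_or_nonempty with rfl | hS
  · exact ⟨fun _ => Classical.arbitrary ι, fun i j => by simp [EnvyFreeUpToOne]⟩
  obtain ⟨a, -, ha⟩ := exists_min_image univ p univ_nonempty
  obtain ⟨g, hgS, hg⟩ := exists_max_image S (v a) hS
  obtain ⟨f, hf⟩ := ih (S.erase g) (erase_ssubset hgS) (update p a (univ.sup p + 1))
  refine ⟨update f g a, ?_⟩
  rw [filter_update_eq_update_filter S f hgS a]
  refine hf.update_insert (fun i => Nat.lt_succ_of_le (le_sup (mem_univ i)))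
    (fun i => ha i (mem_univ i)) (fun i => by simp) (hv a g) (fun i x hx => hg x ?_)
  exact mem_of_mem_erase (mem_of_mem_filter x hx)

end

lemma isAllocation_fibers {n m : ℕ} (f : Fin m → Fin n) :
    IsAllocation (fun i => univ.filter (f · = i)) :=
  ⟨fun _ _ hij => disjoint_filter.2 fun _ _ hi hj => hij (hi ▸ hj), by ext x; simp⟩

/-- every fair division instance with additive nonnegative valuations
admits an EF1 allocation of all items. -/
theorem ef1_exists {n m : ℕ} (hn : 2 ≤ n) (v : Fin n → Fin m → ℝ)
    (hv : ∀ i g, 0 ≤ v i g) :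
    ∃ A : Fin n → Finset (Fin m), IsAllocation A ∧ IsEF1 v A := by
  have : Nonempty (Fin n) := ⟨⟨0, by omega⟩⟩
  obtain ⟨f, hf⟩ := exists_roundRobinInvariant hv univ (fun _ => 0)
  exact ⟨_, isAllocation_fibers f, fun i j hj =>
    (hf i j).2.exists_erase_le (hv i) (nonempty_iff_ne_empty.2 hj)⟩
end

section
/- For every integer k ≥ 2 there exists a fair division instance with n = k² agents and k² indivisible items, with additive ternary normalized valuations, in which the maximum social welfare over all allocations is at least (k²/(2k−1)) times the social welfare of every EF1 allocation. Consequently, the price of EF1 for n agents with additive ternary valuations is at least √n/2 = Ω(√n). -/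
def SW {n m : ℕ} (v : Fin n → Fin m → ℝ) (A : Fin n → Finset (Fin m)) : ℝ :=
  ∑ i, ∑ g ∈ A i, v i g

open Finset

lemma Fin.card_filter_div_eq {n k i : ℕ} (hk : 0 < k) (hi : i * k + k ≤ n) :
    #{g : Fin n | (g : ℕ) / k = i} = k := by
  have : (univ.filter fun g : Fin n => (g : ℕ) / k = i).map Fin.valEmbedding =
      Ico (i * k) (i * k + k) := by
    ext x
    simp only [mem_map, mem_filter, mem_univ, true_and, Fin.valEmbedding_apply, mem_Ico]
    constructor
    · rintro ⟨g, hg, rfl⟩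
      have := (Nat.div_eq_iff hk).1 hg
      omega
    · intro hx
      exact ⟨⟨x, by omega⟩, (Nat.div_eq_iff hk).2 (by dsimp only; omega), rfl⟩
  rw [← card_map, this, Nat.card_Ico, Nat.add_sub_cancel_left]

section Allocation

variable {n m : ℕ}

lemma IsAllocation.sum_card {A : Fin n → Finset (Fin m)} (hA : IsAllocation A) :
    ∑ i, #(A i) = m := by
  rw [← card_biUnion fun i _ j _ hij => hA.1 i j hij, hA.2, card_univ, Fintype.card_fin]

lemma isAllocation_fiber (σ : Fin m → Fin n) : IsAllocation fun i => {g | σ g = i} := by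
  refine ⟨fun i j hij => disjoint_filter.2 fun g _ hi hj => hij (hi ▸ hj), ?_⟩
  ext g
  simp

lemma SW_fiber (v : Fin n → Fin m → ℝ) (σ : Fin m → Fin n) :
    SW v (fun i => {g | σ g = i}) = ∑ g, v (σ g) g := by
  rw [SW, ← sum_fiberwise univ σ fun g => v (σ g) g]
  refine sum_congr rfl fun i _ => sum_congr rfl fun g hg => ?_
  rw [(mem_filter.1 hg).2]

lemma IsEF1.card_le_card_add_one {v : Fin n → Fin m → ℝ} {A : Fin n → Finset (Fin m)}
    (hA : IsEF1 v A) {d : Fin n} (hd : ∀ g, v d g = 1) (j : Fin n) :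
    #(A j) ≤ #(A d) + 1 := by
  rcases eq_or_ne (A j) ∅ with h | h
  · simp [h]
  obtain ⟨g, hg, hle⟩ := hA d j h
  simp only [hd, sum_const, nsmul_eq_mul, mul_one, Nat.cast_le] at hle
  rw [card_erase_of_mem hg] at hle
  omega

end Allocation

namespace EF1LowerBound

variable (k : ℕ)

def owner (g : Fin (k ^ 2)) : Fin (k ^ 2) :=
  ⟨g / k, (Nat.div_le_self _ _).trans_lt g.2⟩

def valuation (i g : Fin (k ^ 2)) : ℝ :=
  if i.val < k then if owner k g = i then k else 0 else 1

variable {k}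

lemma owner_lt (hk : 0 < k) (g : Fin (k ^ 2)) : (owner k g).val < k :=
  (Nat.div_lt_iff_lt_mul hk).2 (sq k ▸ g.2)

lemma card_owner_eq (hk : 0 < k) {i : Fin (k ^ 2)} (hi : i.val < k) :
    #{g | owner k g = i} = k := by
  simp only [owner, Fin.ext_iff]
  exact Fin.card_filter_div_eq hk (by nlinarith)

lemma valuation_owner (hk : 0 < k) (g : Fin (k ^ 2)) : valuation k (owner k g) g = k := by
  simp [valuation, owner_lt hk]

lemma valuation_of_le {i : Fin (k ^ 2)} (hi : k ≤ i.val) (g : Fin (k ^ 2)) :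
    valuation k i g = 1 :=
  if_neg (not_lt.2 hi)

lemma valuation_eq_or (i g : Fin (k ^ 2)) :
    valuation k i g = k ∨ valuation k i g = 1 ∨ valuation k i g = 0 := by
  unfold valuation
  split_ifs <;> simp

lemma sum_valuation_of_lt {i : Fin (k ^ 2)} (hi : i.val < k) (S : Finset (Fin (k ^ 2))) :
    ∑ g ∈ S, valuation k i g = k * #{g ∈ S | owner k g = i} := by
  simp only [valuation, if_pos hi]
  rw [← sum_filter, sum_const, nsmul_eq_mul, mul_comm]

lemma sum_valuation_of_le {i : Fin (k ^ 2)} (hi : k ≤ i.val) (S : Finset (Fin (k ^ 2))) :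
    ∑ g ∈ S, valuation k i g = #S := by
  simp [valuation_of_le hi]

lemma sum_valuation_univ (hk : 0 < k) (i : Fin (k ^ 2)) : ∑ g, valuation k i g = k ^ 2 := by
  rcases lt_or_ge i.val k with hi | hi
  · rw [sum_valuation_of_lt hi, card_owner_eq hk hi]
    ring
  · rw [sum_valuation_of_le hi, card_univ, Fintype.card_fin]
    push_cast
    rfl

lemma SW_owner (hk : 0 < k) : SW (valuation k) (fun i => {g | owner k g = i}) = k ^ 3 := by
  simp [SW_fiber, valuation_owner hk]
  ring

lemma sum_card_own_le {A : Fin (k ^ 2) → Finset (Fin (k ^ 2))}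
    (hA : IsAllocation A) (hE : IsEF1 (valuation k) A) :
    ∑ j with j.val < k, #{g ∈ A j | owner k g = j} ≤ k := by
  have hspecialists : #{j : Fin (k ^ 2) | j.val < k} = k := by
    rw [Fin.card_filter_val_lt, min_eq_right (Nat.le_self_pow two_ne_zero k)]
  by_cases h : ∃ d : Fin (k ^ 2), k ≤ d.val ∧ A d = ∅
  · obtain ⟨d, hd, hAd⟩ := h
    have hsingle (j : Fin (k ^ 2)) : #(A j) ≤ 1 := by
      simpa [hAd] using hE.card_le_card_add_one (valuation_of_le hd) j
    calc _ ≤ ∑ j : Fin (k ^ 2) with j.val < k, 1 :=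
          sum_le_sum fun j _ => (card_filter_le _ _).trans (hsingle j)
      _ = k := by rw [sum_const, smul_eq_mul, mul_one, hspecialists]
  · push Not at h
    have hgeneralists : #{j : Fin (k ^ 2) | ¬ j.val < k} ≤ ∑ j with ¬ j.val < k, #(A j) := by
      simpa using card_nsmul_le_sum _ (fun j => #(A j)) 1 fun j hj =>
        card_pos.2 (h j (not_lt.1 (mem_filter.1 hj).2))
    have hsplit := sum_filter_add_sum_filter_not univ (fun j : Fin (k ^ 2) => j.val < k)
      fun j => #(A j)
    have hcard := card_filter_add_card_filter_not (s := univ) fun j : Fin (k ^ 2) => j.val < k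
    rw [hA.sum_card] at hsplit
    rw [hspecialists, card_univ, Fintype.card_fin] at hcard
    calc _ ≤ ∑ j with j.val < k, #(A j) := sum_le_sum fun j _ => card_filter_le _ _
      _ ≤ k := by omega

lemma SW_le_of_isEF1 (hk : 0 < k) {A : Fin (k ^ 2) → Finset (Fin (k ^ 2))}
    (hA : IsAllocation A) (hE : IsEF1 (valuation k) A) :
    SW (valuation k) A ≤ k * (2 * k - 1) := by
  set own := ∑ j with j.val < k, #{g ∈ A j | owner k g = j}
  set t := ∑ j with j.val < k, #(A j)
  set u := ∑ j with ¬ j.val < k, #(A j)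
  have hSW : SW (valuation k) A = k * own + u := by
    rw [SW, ← sum_filter_add_sum_filter_not univ fun j : Fin (k ^ 2) => j.val < k]
    push_cast [own, u, mul_sum]
    congr 1 <;> refine sum_congr rfl fun j hj => ?_
    · exact sum_valuation_of_lt (mem_filter.1 hj).2 _
    · exact sum_valuation_of_le (not_lt.1 (mem_filter.1 hj).2) _
  have htu : t + u = k ^ 2 := (sum_filter_add_sum_filter_not _ _ _).trans hA.sum_card
  have hown_t : own ≤ t := sum_le_sum fun j _ => card_filter_le _ _
  have hown_k : own ≤ k := sum_card_own_le hA hE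
  have htu' : (t + u : ℝ) = k ^ 2 := by exact_mod_cast htu
  have hown_t' : (own : ℝ) ≤ t := by exact_mod_cast hown_t
  have hown_k' : (own : ℝ) ≤ k := by exact_mod_cast hown_k
  have hk1 : (1 : ℝ) ≤ k := by exact_mod_cast hk
  rw [hSW]
  nlinarith [mul_le_mul_of_nonneg_left hown_k' (sub_nonneg.2 hk1)]

end EF1LowerBound

open EF1LowerBound in
/-- for every `k ≥ 2` there is an instance with `k²` agents and `k²` items,
with additive ternary normalized valuations, in which some allocation has social welfare
at least `k²/(2k-1)` (hence at least `√(k²)/2`) times that of every EF1 allocation. -/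
theorem price_of_ef1_lower_bound (k : ℕ) (hk : 2 ≤ k) :
    ∃ (a b : ℝ) (v : Fin (k ^ 2) → Fin (k ^ 2) → ℝ),
      b < a ∧ 0 < b ∧
      (∀ i g, v i g = a ∨ v i g = b ∨ v i g = 0) ∧
      (∀ g, ∃ i, 0 < v i g) ∧
      (∀ i j, ∑ g, v i g = ∑ g, v j g) ∧
      ∃ Opt : Fin (k ^ 2) → Finset (Fin (k ^ 2)),
        IsAllocation Opt ∧
        ∀ A : Fin (k ^ 2) → Finset (Fin (k ^ 2)), IsAllocation A → IsEF1 v A →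
          ((k : ℝ) ^ 2 / (2 * k - 1)) * SW v A ≤ SW v Opt ∧
          (Real.sqrt ((k : ℝ) ^ 2) / 2) * SW v A ≤ SW v Opt := by
  have hk0 : 0 < k := by omega
  have hkR : (2 : ℝ) ≤ k := by exact_mod_cast hk
  refine ⟨k, 1, valuation k, by linarith, one_pos, valuation_eq_or,
    fun g => ⟨owner k g, by rw [valuation_owner hk0]; positivity⟩,
    fun i j => by rw [sum_valuation_univ hk0, sum_valuation_univ hk0], _,
    isAllocation_fiber (owner k), fun A hA hE => ?_⟩
  have hSW := SW_le_of_isEF1 hk0 hA hE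
  rw [SW_owner hk0, Real.sqrt_sq (Nat.cast_nonneg k)]
  constructor
  · rw [div_mul_eq_mul_div, div_le_iff₀ (by linarith)]
    nlinarith [mul_le_mul_of_nonneg_left hSW (sq_nonneg (k : ℝ))]
  · nlinarith [mul_le_mul_of_nonneg_left hSW (by positivity : (0 : ℝ) ≤ k / 2)]
end
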